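/- arXiv:1403.5003 — 3 statements merged into one kernel-verified Lean document; each statement's English description precedes it below -/
import Mathlib

section
/- For any finite simple graph G with α*(G) > α(G) and any ℓ ≥ 1, the disjoint union of ℓ copies of G satisfies α*(G^{+ℓ}) > α(G^{+ℓ}) (where α(G^{+ℓ}) = ℓ·α(G)). -/
open scoped BigOperators ComplexOrder
open Matrix

noncomputable section

namespace ZeroError

variable {V W : Type*}

/-- The independence number of a simple graph: the maximum cardinality of a set of
pairwise non-adjacent vertices. -/
def indepNum [Fintype V] (G : SimpleGraph V) : ℕ :=
  sSup {n | ∃ s : Finset V, s.card = n ∧ ∀ u ∈ s, ∀ v ∈ s, u ≠ v → ¬ G.Adj u v}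

/-- The strong product of two simple graphs. -/
def strongProd (G : SimpleGraph V) (H : SimpleGraph W) : SimpleGraph (V × W) where
  Adj x y := x ≠ y ∧ (x.1 = y.1 ∨ G.Adj x.1 y.1) ∧ (x.2 = y.2 ∨ H.Adj x.2 y.2)
  symm := by
    constructor
    rintro x y ⟨hne, h1, h2⟩
    exact ⟨hne.symm, h1.imp Eq.symm (fun a => a.symm), h2.imp Eq.symm (fun a => a.symm)⟩
  loopless := by constructor; rintro x ⟨hne, -⟩; exact hne rfl

/-- The n-fold strong power of a simple graph. -/
def strongPow (G : SimpleGraph V) (n : ℕ) : SimpleGraph (Fin n → V) where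
  Adj u v := u ≠ v ∧ ∀ i, u i = v i ∨ G.Adj (u i) (v i)
  symm := by
    constructor
    rintro u v ⟨hne, h⟩
    exact ⟨hne.symm, fun i => (h i).imp Eq.symm (fun a => a.symm)⟩
  loopless := by constructor; rintro u ⟨hne, -⟩; exact hne rfl

/-- `copies G ℓ` is the disjoint union `G^{+ℓ}` of ℓ copies of `G`. -/
def copies (G : SimpleGraph V) (ℓ : ℕ) : SimpleGraph (V × Fin ℓ) where
  Adj x y := x.2 = y.2 ∧ G.Adj x.1 y.1
  symm := by constructor; rintro x y ⟨h1, h2⟩; exact ⟨h1.symm, h2.symm⟩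
  loopless := by constructor; rintro x ⟨-, h⟩; exact G.loopless.irrefl _ h

/-- The Cartesian product `G □ K_t` of a graph with the complete graph on `t` vertices. -/
def cartProdK (G : SimpleGraph V) (t : ℕ) : SimpleGraph (V × Fin t) where
  Adj x y := (G.Adj x.1 y.1 ∧ x.2 = y.2) ∨ (x.1 = y.1 ∧ x.2 ≠ y.2)
  symm := by
    constructor
    rintro x y (⟨h1, h2⟩ | ⟨h1, h2⟩)
    · exact Or.inl ⟨h1.symm, h2.symm⟩
    · exact Or.inr ⟨h1.symm, h2.symm⟩
  loopless := by constructor; rintro x (⟨h, -⟩ | ⟨-, h⟩); exacts [G.loopless.irrefl _ h, h rfl]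

/-- The chromatic number: the least number of colors of a proper coloring. -/
def chromNum [Fintype V] (G : SimpleGraph V) : ℕ :=
  sInf {m | ∃ c : V → Fin m, ∀ u v, G.Adj u v → c u ≠ c v}

/-- The entanglement-assisted independence number `α*(G)`. -/
def qIndepNum [Fintype V] (G : SimpleGraph V) : ℕ :=
  sSup {m | ∃ (d : ℕ) (ρ : Matrix (Fin d) (Fin d) ℂ)
      (σ : Fin m → V → Matrix (Fin d) (Fin d) ℂ),
    ρ.PosSemidef ∧ ρ.trace = 1 ∧ (∀ i u, (σ i u).PosSemidef) ∧
    (∀ i, ∑ u, σ i u = ρ) ∧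
    ∀ i j u v, i ≠ j → (u = v ∨ G.Adj u v) → σ i u * σ j v = 0}

/-- The entanglement-assisted chromatic number `χ*(G)`. -/
def qChromNum [Fintype V] (G : SimpleGraph V) : ℕ :=
  sInf {m | ∃ (d : ℕ) (ρ : Matrix (Fin d) (Fin d) ℂ)
      (σ : V → Fin m → Matrix (Fin d) (Fin d) ℂ),
    ρ.PosSemidef ∧ ρ.trace = 1 ∧ (∀ x i, (σ x i).PosSemidef) ∧
    (∀ x, ∑ i, σ x i = ρ) ∧
    ∀ x y i, G.Adj x y → σ x i * σ y i = 0}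

/-- The partial trace onto the k-th tensor factor:
`(Tr_{B_{-k}} M)_{a,b} = Σ M_{s,t}` over tuples `s, t` with `s k = a`, `t k = b` and
`s r = t r` for all `r ≠ k`. -/
def ptraceK {d ℓ : ℕ} (k : Fin ℓ)
    (M : Matrix (Fin ℓ → Fin d) (Fin ℓ → Fin d) ℂ) : Matrix (Fin d) (Fin d) ℂ :=
  Matrix.of fun a b => ∑ s : Fin ℓ → Fin d, ∑ t : Fin ℓ → Fin d,
    if s k = a ∧ t k = b ∧ ∀ r, r ≠ k → s r = t r then M s t else 0

/-- The entanglement-assisted compound independence number `α*_{1,ℓ}(G)` with ℓ receivers. -/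
def qCompoundNum [Fintype V] (G : SimpleGraph V) (ℓ : ℕ) : ℕ :=
  sSup {m | ∃ (d : ℕ) (ρ : Matrix (Fin ℓ → Fin d) (Fin ℓ → Fin d) ℂ)
      (σ : Fin m → V → Matrix (Fin ℓ → Fin d) (Fin ℓ → Fin d) ℂ),
    ρ.PosSemidef ∧ ρ.trace = 1 ∧ (∀ i u, (σ i u).PosSemidef) ∧
    (∀ i, ∑ u, σ i u = ρ) ∧
    ∀ (k : Fin ℓ) i j u v, i ≠ j → (u = v ∨ G.Adj u v) →
      ptraceK k (σ i u) * ptraceK k (σ j v) = 0}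

/-- The Shannon capacity `c(G) = sup_{n ≥ 1} (1/n) log₂ α(G^{⊠n})`. -/
def shannonCap [Fintype V] (G : SimpleGraph V) : ℝ :=
  ⨆ n : ℕ+, Real.logb 2 (indepNum (strongPow G (n : ℕ))) / ((n : ℕ) : ℝ)

/-- The entangled Shannon capacity `c*(G) = sup_{n ≥ 1} (1/n) log₂ α*(G^{⊠n})`. -/
def qShannonCap [Fintype V] (G : SimpleGraph V) : ℝ :=
  ⨆ n : ℕ+, Real.logb 2 (qIndepNum (strongPow G (n : ℕ))) / ((n : ℕ) : ℝ)

/-- The entanglement-assisted compound Shannon capacity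
`c*_{1,ℓ}(G) = sup_{n ≥ 1} (1/n) log₂ α*_{1,ℓ}(G^{⊠n})`. -/
def qCompoundCap [Fintype V] (G : SimpleGraph V) (ℓ : ℕ) : ℝ :=
  ⨆ n : ℕ+, Real.logb 2 (qCompoundNum (strongPow G (n : ℕ)) ℓ) / ((n : ℕ) : ℝ)

/-- The edge-clique cover number `θ_e(G)`: the least number of cliques covering all edges. -/
def edgeCliqueCoverNum [Fintype V] (G : SimpleGraph V) : ℕ :=
  sInf {n | ∃ F : Finset (Finset V), F.card = n ∧ (∀ c ∈ F, G.IsClique (c : Set V)) ∧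
    ∀ u v, G.Adj u v → ∃ c ∈ F, u ∈ c ∧ v ∈ c}

/-- `θ'_e(G)`: the edge-clique cover number plus the number of isolated vertices. -/
def thetaPrime [Fintype V] (G : SimpleGraph V) : ℕ :=
  edgeCliqueCoverNum G + {v : V | ∀ u, ¬ G.Adj v u}.ncard

/-- `f` is an orthogonal representation of `G` in dimension `d`. -/
def IsOrthRep (G : SimpleGraph V) (d : ℕ) (f : V → EuclideanSpace ℂ (Fin d)) : Prop :=
  (∀ v, ‖f v‖ = 1) ∧ ∀ u v, G.Adj u v → inner ℂ (f u) (f v) = (0 : ℂ)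

/-- The orthogonal rank `ξ(G)`. -/
def orthRank (G : SimpleGraph V) : ℕ :=
  sInf {d | ∃ f : V → EuclideanSpace ℂ (Fin d), IsOrthRep G d f}

/-- Vertices of the quarter orthogonality graph `Γ_k`: ±1-vectors of length `k+1`
with first coordinate 1 and an even number of -1 entries. -/
def QOVertex (k : ℕ) : Type :=
  {u : Fin (k + 1) → ℤ // (∀ i, u i = 1 ∨ u i = -1) ∧ u 0 = 1 ∧
    Even ((Finset.univ.filter fun i => u i = -1).card)}

instance (k : ℕ) : Fintype (QOVertex k) :=
  Fintype.ofInjective (fun u : QOVertex k => fun i => decide (u.val i = 1))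
    (by
      intro u v h
      apply Subtype.ext; funext i
      have hi := congrFun h i
      rcases u.prop.1 i with h1 | h1 <;> rcases v.prop.1 i with h2 | h2 <;>
        simp [h1, h2] at hi ⊢)

/-- The quarter orthogonality graph `Γ_k`. -/
def quarterOrthGraph (k : ℕ) : SimpleGraph (QOVertex k) where
  Adj u v := u ≠ v ∧ ∑ i, u.val i * v.val i = 0
  symm := by
    constructor
    rintro u v ⟨hne, h⟩
    refine ⟨hne.symm, ?_⟩
    rw [← h]
    exact Finset.sum_congr rfl fun i _ => mul_comm _ _
  loopless := by constructor; rintro u ⟨hne, -⟩; exact hne rfl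

/-- Vertices of the orthogonality graph `Ω_k`: all ±1-vectors of length `k`. -/
def PMVertex (k : ℕ) : Type :=
  {u : Fin k → ℤ // ∀ i, u i = 1 ∨ u i = -1}

instance (k : ℕ) : Fintype (PMVertex k) :=
  Fintype.ofInjective (fun u : PMVertex k => fun i => decide (u.val i = 1))
    (by
      intro u v h
      apply Subtype.ext; funext i
      have hi := congrFun h i
      rcases u.prop i with h1 | h1 <;> rcases v.prop i with h2 | h2 <;>
        simp [h1, h2] at hi ⊢)

/-- The orthogonality graph `Ω_k`. -/
def orthGraph (k : ℕ) : SimpleGraph (PMVertex k) where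
  Adj u v := u ≠ v ∧ ∑ i, u.val i * v.val i = 0
  symm := by
    constructor
    rintro u v ⟨hne, h⟩
    refine ⟨hne.symm, ?_⟩
    rw [← h]
    exact Finset.sum_congr rfl fun i _ => mul_comm _ _
  loopless := by constructor; rintro u ⟨hne, -⟩; exact hne rfl

/-! If `α*(G) > α(G)`, run an optimal entangled strategy for `G` on one copy inside `G^{+ℓ}`,
and add one input for each vertex `v` of a maximum independent set of `G` and each of the other
`ℓ - 1` copies, which answers `v` in that copy with certainty (its operator is `ρ` itself).
Answers in different copies are never equal or adjacent, so this is a strategy for `G^{+ℓ}` with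
`α*(G) + (ℓ - 1) α(G) > ℓ α(G) = α(G^{+ℓ})` inputs.
The supremum defining `α*` is attained (rather than being the junk value `0`) because of the bound
`α*(G) ≤ |V|`: with `P_u = ∑_i ρ_i^u`, orthogonality gives `Re tr(P_u ρ) ≤ tr(ρ²)`, and summing
over `u` gives `α*(G) tr(ρ²) ≤ |V| tr(ρ²)`. -/

end ZeroError

namespace Matrix

variable {n 𝕜 : Type*} [Fintype n] [RCLike 𝕜]

open scoped MatrixOrder in
theorem PosSemidef.trace_mul_nonneg {A B : Matrix n n 𝕜} (hA : A.PosSemidef)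
    (hB : B.PosSemidef) : 0 ≤ (A * B).trace := by
  classical
  have hS : (CFC.sqrt A).IsHermitian := (CFC.sqrt_nonneg A).posSemidef.isHermitian
  rw [← CFC.sqrt_mul_sqrt_self A hA.nonneg, Matrix.mul_assoc, trace_mul_comm, Matrix.mul_assoc]
  simpa [hS.eq, Matrix.mul_assoc] using
    (hB.conjTranspose_mul_mul_same (CFC.sqrt A)).trace_nonneg

theorem IsHermitian.re_trace_mul_self_pos {A : Matrix n n 𝕜} (hA : A.IsHermitian)
    (h : A ≠ 0) : 0 < RCLike.re (A * A).trace := by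
  have h0 : 0 ≤ (Aᴴ * A).trace := (posSemidef_conjTranspose_mul_self A).trace_nonneg
  have hne : (Aᴴ * A).trace ≠ 0 := trace_conjTranspose_mul_self_eq_zero_iff.not.mpr h
  rw [hA.eq] at h0 hne
  exact (RCLike.pos_iff.mp (lt_of_le_of_ne h0 hne.symm)).1

theorem IsHermitian.two_mul_re_trace_mul_le {A B : Matrix n n 𝕜} (hA : A.IsHermitian)
    (hB : B.IsHermitian) :
    2 * RCLike.re (A * B).trace ≤ RCLike.re (A * A).trace + RCLike.re (B * B).trace := by
  have h0 := RCLike.nonneg_iff.mp (posSemidef_conjTranspose_mul_self (A - B)).trace_nonneg |>.1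
  rw [(hA.sub hB).eq, sub_mul, mul_sub, mul_sub, trace_sub, trace_sub, trace_sub,
    trace_mul_comm B A] at h0
  simp only [map_sub] at h0
  linarith

theorem IsHermitian.mul_eq_zero_comm {A B : Matrix n n 𝕜} (hA : A.IsHermitian)
    (hB : B.IsHermitian) (h : A * B = 0) : B * A = 0 := by
  simpa [hA.eq, hB.eq] using congrArg (·ᴴ) h

end Matrix

namespace ZeroError

section Copies

variable {V : Type*} {G : SimpleGraph V} {ℓ : ℕ}

theorem copies_eq_or_adj {x y : V × Fin ℓ} (h : x = y ∨ (copies G ℓ).Adj x y) :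
    x.2 = y.2 ∧ (x.1 = y.1 ∨ G.Adj x.1 y.1) := by
  rcases h with rfl | ⟨hk, hadj⟩
  exacts [⟨rfl, Or.inl rfl⟩, ⟨hk, Or.inr hadj⟩]

theorem isIndepSet_copies_prod {s : Set V} (hs : G.IsIndepSet s) (K : Set (Fin ℓ)) :
    (copies G ℓ).IsIndepSet (s ×ˢ K) := by
  rintro ⟨u, k⟩ ⟨hu, -⟩ ⟨v, k'⟩ ⟨hv, -⟩ hne ⟨rfl, hadj⟩
  exact hs hu hv (fun huv => hne (Prod.ext huv rfl)) hadj

end Copies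

variable {V ι κ n : Type*} [Fintype V] [Fintype n]

structure IsQIndepStrategy (G : SimpleGraph V) (ρ : Matrix n n ℂ)
    (σ : ι → V → Matrix n n ℂ) : Prop where
  posSemidef_state : ρ.PosSemidef
  trace_state : ρ.trace = 1
  posSemidef : ∀ i u, (σ i u).PosSemidef
  sum_eq : ∀ i, ∑ u, σ i u = ρ
  mul_eq_zero : ∀ i j u v, i ≠ j → (u = v ∨ G.Adj u v) → σ i u * σ j v = 0

theorem isQIndepStrategy_iff (G : SimpleGraph V) (ρ : Matrix n n ℂ)
    (σ : ι → V → Matrix n n ℂ) :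
    IsQIndepStrategy G ρ σ ↔ ρ.PosSemidef ∧ ρ.trace = 1 ∧ (∀ i u, (σ i u).PosSemidef) ∧
      (∀ i, ∑ u, σ i u = ρ) ∧
      ∀ i j u v, i ≠ j → (u = v ∨ G.Adj u v) → σ i u * σ j v = 0 :=
  ⟨fun ⟨h₁, h₂, h₃, h₄, h₅⟩ => ⟨h₁, h₂, h₃, h₄, h₅⟩,
    fun ⟨h₁, h₂, h₃, h₄, h₅⟩ => ⟨h₁, h₂, h₃, h₄, h₅⟩⟩

def qIndepFeasible (G : SimpleGraph V) : Set ℕ :=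
  {m | ∃ (d : ℕ) (ρ : Matrix (Fin d) (Fin d) ℂ)
    (σ : Fin m → V → Matrix (Fin d) (Fin d) ℂ), IsQIndepStrategy G ρ σ}

theorem qIndepNum_eq_sSup (G : SimpleGraph V) : qIndepNum G = sSup (qIndepFeasible G) := by
  simp only [qIndepNum, qIndepFeasible, isQIndepStrategy_iff]

namespace IsQIndepStrategy

variable {G : SimpleGraph V} {ρ : Matrix n n ℂ} {σ : ι → V → Matrix n n ℂ}

theorem posSemidef_state_sub (h : IsQIndepStrategy G ρ σ) (i : ι) (u : V) :
    (ρ - σ i u).PosSemidef := by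
  classical
  rw [← h.sum_eq i, ← Finset.sum_erase_add _ _ (Finset.mem_univ u), add_sub_cancel_right]
  exact posSemidef_sum _ fun v _ => h.posSemidef i v

theorem re_trace_sum_mul_le [Fintype ι] (h : IsQIndepStrategy G ρ σ) (u : V) :
    ((∑ i, σ i u) * ρ).trace.re ≤ (ρ * ρ).trace.re := by
  have hP : (∑ i, σ i u).IsHermitian :=
    (posSemidef_sum _ fun i _ => h.posSemidef i u).isHermitian
  have hsq : (∑ i, σ i u) * (∑ i, σ i u) = ∑ i, σ i u * σ i u := by
    rw [Finset.sum_mul_sum]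
    refine Finset.sum_congr rfl fun i _ => Finset.sum_eq_single i
      (fun j _ hji => h.mul_eq_zero i j u u (Ne.symm hji) (Or.inl rfl)) (by simp)
  have hdiag (i : ι) : (σ i u * σ i u).trace.re ≤ (σ i u * ρ).trace.re := by
    have := RCLike.nonneg_iff.mp
      ((h.posSemidef i u).trace_mul_nonneg (h.posSemidef_state_sub i u)) |>.1
    rw [mul_sub, trace_sub, map_sub] at this
    simpa using this
  have hsum : (∑ i, σ i u * σ i u).trace.re ≤ ((∑ i, σ i u) * ρ).trace.re := by
    simp only [Finset.sum_mul, trace_sum, Complex.re_sum]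
    exact Finset.sum_le_sum fun i _ => hdiag i
  have hamgm := hP.two_mul_re_trace_mul_le h.posSemidef_state.isHermitian
  rw [hsq] at hamgm
  simp only [RCLike.re_to_complex] at hamgm
  linarith

theorem card_le [Fintype ι] (h : IsQIndepStrategy G ρ σ) :
    Fintype.card ι ≤ Fintype.card V := by
  have hρ : ρ ≠ 0 := fun h0 => by simpa [h0] using h.trace_state
  have ht := h.posSemidef_state.isHermitian.re_trace_mul_self_pos hρ
  have hsum : ∑ u, ∑ i, σ i u = Fintype.card ι • ρ := by
    rw [Finset.sum_comm]
    simp [h.sum_eq]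
  have : (Fintype.card ι : ℝ) * (ρ * ρ).trace.re ≤ Fintype.card V * (ρ * ρ).trace.re :=
    calc (Fintype.card ι : ℝ) * (ρ * ρ).trace.re
        = ∑ u, ((∑ i, σ i u) * ρ).trace.re := by
          simp only [← Complex.re_sum, ← trace_sum, ← Finset.sum_mul, hsum, smul_mul,
            trace_smul]
          simp
      _ ≤ ∑ _u : V, (ρ * ρ).trace.re := Finset.sum_le_sum fun u _ => h.re_trace_sum_mul_le u
      _ = Fintype.card V * (ρ * ρ).trace.re := by simp
  exact_mod_cast le_of_mul_le_mul_right this ht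

theorem comp_injective (h : IsQIndepStrategy G ρ σ) {e : κ → ι} (he : e.Injective) :
    IsQIndepStrategy G ρ (σ ∘ e) :=
  ⟨h.posSemidef_state, h.trace_state, fun i => h.posSemidef (e i), fun i => h.sum_eq (e i),
    fun i j u v hij => h.mul_eq_zero (e i) (e j) u v (he.ne hij)⟩

theorem sumElim {τ : κ → V → Matrix n n ℂ} (hσ : IsQIndepStrategy G ρ σ)
    (hτ : IsQIndepStrategy G ρ τ)
    (hστ : ∀ i j u v, (u = v ∨ G.Adj u v) → σ i u * τ j v = 0) :
    IsQIndepStrategy G ρ (Sum.elim σ τ) := by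
  refine ⟨hσ.posSemidef_state, hσ.trace_state, ?_, ?_, ?_⟩
  · rintro (i | j) u
    exacts [hσ.posSemidef i u, hτ.posSemidef j u]
  · rintro (i | j)
    exacts [hσ.sum_eq i, hτ.sum_eq j]
  · rintro (i | i) (j | j) u v hij huv
    · exact hσ.mul_eq_zero i j u v (fun h => hij (congrArg _ h)) huv
    · exact hστ i j u v huv
    · exact (hσ.posSemidef j v).isHermitian.mul_eq_zero_comm (hτ.posSemidef i u).isHermitian
        (hστ j i v u (huv.imp Eq.symm G.adj_symm))
    · exact hτ.mul_eq_zero i j u v (fun h => hij (congrArg _ h)) huv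

theorem onCopy (h : IsQIndepStrategy G ρ σ) {ℓ : ℕ} (k : Fin ℓ) :
    IsQIndepStrategy (copies G ℓ) ρ (fun i x => if x.2 = k then σ i x.1 else 0) := by
  refine ⟨h.posSemidef_state, h.trace_state, fun i x => ?_, fun i => ?_,
    fun i j x y hij hxy => ?_⟩
  · split_ifs
    exacts [h.posSemidef i x.1, PosSemidef.zero]
  · simp [Fintype.sum_prod_type, h.sum_eq i]
  · obtain ⟨hk, huv⟩ := copies_eq_or_adj hxy
    split_ifs with hx hy hy
    exacts [h.mul_eq_zero i j _ _ hij huv, (hy (hk ▸ hx)).elim, zero_mul _, zero_mul _]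

end IsQIndepStrategy

theorem isQIndepStrategy_of_isIndepSet [DecidableEq V] {G : SimpleGraph V} {ρ : Matrix n n ℂ}
    (hρ : ρ.PosSemidef) (hρ₁ : ρ.trace = 1) {s : Set V} (hs : G.IsIndepSet s) :
    IsQIndepStrategy G ρ (fun t : s => Pi.single (t : V) ρ) := by
  refine ⟨hρ, hρ₁, fun t u => ?_, fun t => by simp, fun t t' u v htt' huv => ?_⟩
  · by_cases hu : u = t
    · subst hu; simpa using hρ
    · simpa [hu] using PosSemidef.zero
  · rcases eq_or_ne u t with rfl | hu
    · rcases eq_or_ne v t' with rfl | hv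
      · have hne : (t : V) ≠ t' := Subtype.coe_injective.ne htt'
        exact (huv.resolve_left hne |> hs t.2 t'.2 hne).elim
      · simp [hv]
    · simp [hu]

theorem bddAbove_qIndepFeasible (G : SimpleGraph V) : BddAbove (qIndepFeasible G) :=
  ⟨Fintype.card V, fun m ⟨_, _, _, h⟩ => by simpa using h.card_le⟩

theorem IsQIndepStrategy.card_le_qIndepNum [Fintype ι] {G : SimpleGraph V} {d : ℕ}
    {ρ : Matrix (Fin d) (Fin d) ℂ} {σ : ι → V → Matrix (Fin d) (Fin d) ℂ}
    (h : IsQIndepStrategy G ρ σ) : Fintype.card ι ≤ qIndepNum G := by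
  rw [qIndepNum_eq_sSup]
  exact le_csSup (bddAbove_qIndepFeasible G)
    ⟨d, ρ, σ ∘ (Fintype.equivFin ι).symm, h.comp_injective (Equiv.injective _)⟩

theorem exists_isQIndepStrategy_qIndepNum (G : SimpleGraph V) :
    ∃ (d : ℕ) (ρ : Matrix (Fin d) (Fin d) ℂ)
      (σ : Fin (qIndepNum G) → V → Matrix (Fin d) (Fin d) ℂ), IsQIndepStrategy G ρ σ := by
  have hempty : IsQIndepStrategy G (1 : Matrix (Fin 1) (Fin 1) ℂ) (Fin.elim0 : Fin 0 → _) :=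
    ⟨PosSemidef.one, by simp, fun i => i.elim0, fun i => i.elim0, fun i => i.elim0⟩
  have := Nat.sSup_mem (s := qIndepFeasible G) ⟨0, 1, 1, _, hempty⟩ (bddAbove_qIndepFeasible G)
  rwa [← qIndepNum_eq_sSup] at this

theorem indepNum_eq_simpleGraph_indepNum (G : SimpleGraph V) : indepNum G = G.indepNum := by
  simp only [indepNum, SimpleGraph.indepNum, SimpleGraph.isNIndepSet_iff, and_comm]
  rfl

theorem card_filter_snd_eq_le_indepNum {G : SimpleGraph V} {ℓ : ℕ} {S : Finset (V × Fin ℓ)}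
    (hS : (copies G ℓ).IsIndepSet (S : Set (V × Fin ℓ))) (k : Fin ℓ) :
    (S.filter (·.2 = k)).card ≤ G.indepNum := by
  classical
  have hinj : Set.InjOn Prod.fst (S.filter (·.2 = k) : Set (V × Fin ℓ)) := fun x hx y hy hxy =>
    Prod.ext hxy ((Finset.mem_filter.mp hx).2.trans (Finset.mem_filter.mp hy).2.symm)
  rw [← Finset.card_image_of_injOn hinj]
  refine SimpleGraph.IsIndepSet.card_le_indepNum ?_
  simp only [Finset.coe_image, Finset.coe_filter]
  rintro _ ⟨x, ⟨hx, hxk⟩, rfl⟩ _ ⟨y, ⟨hy, hyk⟩, rfl⟩ hne hadj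
  exact hS hx hy (fun hxy => hne (congrArg _ hxy)) ⟨hxk.trans hyk.symm, hadj⟩

theorem indepNum_copies (G : SimpleGraph V) (ℓ : ℕ) :
    indepNum (copies G ℓ) = ℓ * indepNum G := by
  rw [indepNum_eq_simpleGraph_indepNum, indepNum_eq_simpleGraph_indepNum]
  apply le_antisymm
  · obtain ⟨S, hS, hcard⟩ := (copies G ℓ).exists_isNIndepSet_indepNum
    calc (copies G ℓ).indepNum = S.card := hcard.symm
      _ = ∑ k, (S.filter (·.2 = k)).card :=
        Finset.card_eq_sum_card_fiberwise fun _ _ => Finset.mem_univ _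
      _ ≤ ∑ _k : Fin ℓ, G.indepNum :=
        Finset.sum_le_sum fun k _ => card_filter_snd_eq_le_indepNum hS k
      _ = ℓ * G.indepNum := by simp
  · obtain ⟨s, hs, hcard⟩ := G.exists_isNIndepSet_indepNum
    have hprod : (copies G ℓ).IsIndepSet
        ((s ×ˢ (Finset.univ : Finset (Fin ℓ)) : Finset (V × Fin ℓ)) : Set (V × Fin ℓ)) := by
      simpa using isIndepSet_copies_prod hs Set.univ
    simpa [hcard, mul_comm] using hprod.card_le_indepNum

theorem qIndepNum_add_mul_indepNum_le (G : SimpleGraph V) (b : ℕ) :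
    qIndepNum G + b * indepNum G ≤ qIndepNum (copies G (b + 1)) := by
  classical
  obtain ⟨d, ρ, σ, hσ⟩ := exists_isQIndepStrategy_qIndepNum G
  obtain ⟨s, hs, hcard⟩ := G.exists_isNIndepSet_indepNum
  set T : Finset (V × Fin (b + 1)) := s ×ˢ {0}ᶜ
  have hT : (copies G (b + 1)).IsIndepSet (T : Set (V × Fin (b + 1))) := by
    simpa [T] using isIndepSet_copies_prod hs {0}ᶜ
  have hstrat := (hσ.onCopy (0 : Fin (b + 1))).sumElim
    (isQIndepStrategy_of_isIndepSet hσ.posSemidef_state hσ.trace_state hT) fun i t x y hxy => by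
      obtain ⟨hk, -⟩ := copies_eq_or_adj hxy
      have ht : (t : V × Fin (b + 1)).2 ≠ 0 := by
        simpa [T] using (Finset.mem_product.mp t.2).2
      by_cases hx : x.2 = 0
      · rw [Pi.single_eq_of_ne (by rintro rfl; exact ht (hk ▸ hx)), mul_zero]
      · rw [if_neg hx, zero_mul]
  simpa [T, hcard, indepNum_eq_simpleGraph_indepNum, Finset.card_compl, mul_comm] using
    hstrat.card_le_qIndepNum

/-- if `α*(G) > α(G)` then `α*(G^{+ℓ}) > α(G^{+ℓ})` for every `ℓ ≥ 1`
(where `α(G^{+ℓ}) = ℓ·α(G)`). -/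
theorem qIndep_disjoint_union_gt {V : Type} [Fintype V] (G : SimpleGraph V)
    (h : indepNum G < qIndepNum G) (ℓ : ℕ) (hℓ : 1 ≤ ℓ) :
    indepNum (copies G ℓ) < qIndepNum (copies G ℓ) ∧
    indepNum (copies G ℓ) = ℓ * indepNum G := by
  obtain ⟨b, rfl⟩ := Nat.exists_eq_add_of_le' hℓ
  refine ⟨?_, indepNum_copies G (b + 1)⟩
  calc indepNum (copies G (b + 1)) = indepNum G + b * indepNum G := by
        rw [indepNum_copies]; ring
    _ < qIndepNum G + b * indepNum G := by omega
    _ ≤ qIndepNum (copies G (b + 1)) := qIndepNum_add_mul_indepNum_le G b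

end ZeroError
end
end

section
/- For every finite simple graph G with at least one vertex, if t = χ*(G) is the entanglement-assisted chromatic number of G, then α*(G □ K_t) = |V(G)|. -/
open scoped BigOperators ComplexOrder
open Matrix

noncomputable section

/-!
A quantum colouring `σ` of `G` with `t` colours gives an entanglement-assisted independent
family of size `|V|` in `G □ K_t`: message `i` is sent as a fixed vertex `vᵢ`, placed in the
copy of `G` given by the outcome of the colouring measurement `σ vᵢ`. Distinct messages use
distinct vertices of `G`, so they can only clash along an edge of `G` within one copy, where `σ`
is orthogonal.

Conversely, given a family `σ` of size `m`, put `A i v = ∑ⱼ σ i (v, j)`. Then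
`0 ≤ A i v ≤ ρ`, and for fixed `v` the `A i v` are pairwise orthogonal because the copies of
`v` form a clique of `G □ K_t`. Compressing by the (pairwise orthogonal) support projections of the
`A i v` gives `∑ᵢ Tr (A i v) ≤ Tr ρ = 1`; summing over `v` yields `m ≤ |V|`.
-/

theorem IsStarProjection.sum {ι R : Type*} [NonUnitalNonAssocSemiring R] [StarRing R]
    {p : ι → R} {s : Finset ι} (hp : ∀ i ∈ s, IsStarProjection (p i))
    (horth : (s : Set ι).Pairwise fun i j => p i * p j = 0) :
    IsStarProjection (∑ i ∈ s, p i) := by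
  classical
  induction s using Finset.induction_on with
  | empty => rw [Finset.sum_empty]; exact .zero R
  | insert a s ha ih =>
    rw [Finset.sum_insert ha]
    refine (hp a (s.mem_insert_self a)).add
      (ih (fun i hi => hp i (Finset.mem_insert_of_mem hi)) (horth.mono (by simp))) ?_
    rw [Finset.mul_sum]
    refine Finset.sum_eq_zero fun i hi => horth (by simp) (by simp [hi]) ?_
    rintro rfl
    exact ha hi

namespace Matrix

open scoped MatrixOrder

variable {n 𝕜 : Type*} [Fintype n] [RCLike 𝕜]

lemma trace_mul_nonneg_of_isStarProjection {ρ Q : Matrix n n 𝕜} (hρ : 0 ≤ ρ)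
    (hQ : IsStarProjection Q) : 0 ≤ (ρ * Q).trace := by
  have h := ((nonneg_iff_posSemidef.mp hρ).conjTranspose_mul_mul_same Q).trace_nonneg
  rwa [← star_eq_conjTranspose, hQ.isSelfAdjoint.star_eq, trace_mul_cycle,
    hQ.isIdempotentElem.eq, trace_mul_comm] at h

variable [DecidableEq n]

lemma trace_mul_le_trace_of_isStarProjection {ρ Q : Matrix n n 𝕜} (hρ : 0 ≤ ρ)
    (hQ : IsStarProjection Q) : (ρ * Q).trace ≤ ρ.trace := by
  have h := trace_mul_nonneg_of_isStarProjection hρ hQ.one_sub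
  rwa [mul_sub, mul_one, trace_sub, sub_nonneg] at h

lemma continuousOn_real_spectrum (A : Matrix n n 𝕜) (f : ℝ → ℝ) :
    ContinuousOn f (spectrum ℝ A) :=
  (Set.toFinite _).continuousOn _

/-- The orthogonal projection onto the range of a Hermitian matrix: `x * x⁻¹` is the indicator
of `x ≠ 0` since `0⁻¹ = 0`. -/
def supportProj (A : Matrix n n 𝕜) : Matrix n n 𝕜 := cfc (fun x : ℝ => x * x⁻¹) A

lemma isStarProjection_supportProj (A : Matrix n n 𝕜) : IsStarProjection A.supportProj where
  isSelfAdjoint := cfc_predicate _ A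
  isIdempotentElem := by
    have hc := A.continuousOn_real_spectrum
    rw [IsIdempotentElem, supportProj, ← cfc_mul _ _ A (hc _) (hc _)]
    congr 1
    funext x
    by_cases hx : x = 0 <;> simp [hx]

lemma self_mul_supportProj {A : Matrix n n 𝕜} (hA : A.IsHermitian) : A * A.supportProj = A := by
  have hc := A.continuousOn_real_spectrum
  calc A * A.supportProj = cfc id A * cfc (fun x : ℝ => x * x⁻¹) A := by
        rw [cfc_id ℝ A hA.isSelfAdjoint, supportProj]
    _ = cfc (fun x : ℝ => x * (x * x⁻¹)) A := (cfc_mul _ _ A (hc _) (hc _)).symm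
    _ = A := by simp only [← mul_assoc, mul_self_mul_inv]; exact cfc_id' ℝ A hA.isSelfAdjoint

lemma supportProj_mul_supportProj {A B : Matrix n n 𝕜} (hA : A.IsHermitian) (hB : B.IsHermitian)
    (hAB : A * B = 0) : A.supportProj * B.supportProj = 0 := by
  have hcA := A.continuousOn_real_spectrum
  have hcB := B.continuousOn_real_spectrum
  have hA' : A.supportProj = cfc (fun x : ℝ => x⁻¹) A * A :=
    calc A.supportProj = cfc (fun x : ℝ => x⁻¹ * x) A := by simp only [supportProj, mul_comm]
      _ = _ := by rw [cfc_mul _ _ A (hcA _) (hcA _), cfc_id' ℝ A hA.isSelfAdjoint]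
  have hB' : B.supportProj = B * cfc (fun x : ℝ => x⁻¹) B := by
    rw [supportProj, cfc_mul _ _ B (hcB _) (hcB _), cfc_id' ℝ B hB.isSelfAdjoint]
  rw [hA', hB', mul_assoc, ← mul_assoc A, hAB, zero_mul, mul_zero]

theorem sum_trace_le_trace {ι : Type*} [Fintype ι] {ρ : Matrix n n 𝕜} (hρ : 0 ≤ ρ)
    {A : ι → Matrix n n 𝕜} (hA : ∀ i, (A i).IsHermitian) (hle : ∀ i, A i ≤ ρ)
    (horth : Pairwise fun i j => A i * A j = 0) :
    ∑ i, (A i).trace ≤ ρ.trace := by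
  have hP : IsStarProjection (∑ i, (A i).supportProj) :=
    IsStarProjection.sum (fun i _ => isStarProjection_supportProj (A i))
      fun i _ j _ hij => supportProj_mul_supportProj (hA i) (hA j) (horth hij)
  have hcompress : ∀ i, (A i).trace ≤ (ρ * (A i).supportProj).trace := fun i => by
    have h := trace_mul_nonneg_of_isStarProjection (sub_nonneg.mpr (hle i))
      (isStarProjection_supportProj (A i))
    rwa [sub_mul, trace_sub, self_mul_supportProj (hA i), sub_nonneg] at h
  calc ∑ i, (A i).trace ≤ ∑ i, (ρ * (A i).supportProj).trace :=
        Finset.sum_le_sum fun i _ => hcompress i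
    _ = (ρ * ∑ i, (A i).supportProj).trace := by rw [Finset.mul_sum, trace_sum]
    _ ≤ ρ.trace := trace_mul_le_trace_of_isStarProjection hρ hP

end Matrix

namespace ZeroError

variable {V : Type*}

/-- `χ*(G) = sInf {m | QColorable G m}`. -/
def QColorable (G : SimpleGraph V) (m : ℕ) : Prop :=
  ∃ (d : ℕ) (ρ : Matrix (Fin d) (Fin d) ℂ) (σ : V → Fin m → Matrix (Fin d) (Fin d) ℂ),
    ρ.PosSemidef ∧ ρ.trace = 1 ∧ (∀ x i, (σ x i).PosSemidef) ∧
    (∀ x, ∑ i, σ x i = ρ) ∧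
    ∀ x y i, G.Adj x y → σ x i * σ y i = 0

lemma qColorable_of_colorable {G : SimpleGraph V} {m : ℕ} (h : G.Colorable m) :
    QColorable G m := by
  classical
  obtain ⟨c⟩ := h
  refine ⟨1, 1, fun x i => if c x = i then 1 else 0, .one, by simp, fun x i => ?_,
    fun x => by simp, fun x y i hxy => ?_⟩
  · dsimp only
    split_ifs
    exacts [.one, .zero]
  · have hc : c x ≠ c y := c.valid hxy
    dsimp only
    split_ifs with hx hy <;> simp_all

variable [Fintype V]

lemma qColorable_qChromNum (G : SimpleGraph V) : QColorable G (qChromNum G) :=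
  Nat.sInf_mem (s := {m | QColorable G m}) ⟨_, qColorable_of_colorable G.colorable_of_fintype⟩

/-- `α*(G) = sSup {m | HasQIndepFamily G m}`. -/
def HasQIndepFamily (G : SimpleGraph V) (m : ℕ) : Prop :=
  ∃ (d : ℕ) (ρ : Matrix (Fin d) (Fin d) ℂ) (σ : Fin m → V → Matrix (Fin d) (Fin d) ℂ),
    ρ.PosSemidef ∧ ρ.trace = 1 ∧ (∀ i u, (σ i u).PosSemidef) ∧
    (∀ i, ∑ u, σ i u = ρ) ∧
    ∀ i j u v, i ≠ j → (u = v ∨ G.Adj u v) → σ i u * σ j v = 0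

open scoped MatrixOrder

lemma hasQIndepFamily_cartProdK_card {G : SimpleGraph V} {t : ℕ} (h : QColorable G t) :
    HasQIndepFamily (cartProdK G t) (Fintype.card V) := by
  classical
  obtain ⟨d, ρ, σ, hρ, hTr, hσ, hsum, horth⟩ := h
  set e := (Fintype.equivFin V).symm
  refine ⟨d, ρ, fun i p => if p.1 = e i then σ p.1 p.2 else 0, hρ, hTr, fun i p => ?_,
    fun i => ?_, fun i j p q hij hpq => ?_⟩
  · dsimp only
    split_ifs
    exacts [hσ _ _, .zero]
  · simp [Fintype.sum_prod_type, hsum]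
  · dsimp only
    split_ifs with hp hq
    · have hne : p.1 ≠ q.1 := by rw [hp, hq]; exact e.injective.ne hij
      obtain ⟨hadj, hcol⟩ : G.Adj p.1 q.1 ∧ p.2 = q.2 := by
        rcases hpq with rfl | (hadj | ⟨heq, -⟩)
        exacts [absurd rfl hne, hadj, absurd heq hne]
      rw [hcol]
      exact horth _ _ _ hadj
    all_goals simp

lemma le_card_of_hasQIndepFamily_cartProdK {G : SimpleGraph V} {t m : ℕ}
    (h : HasQIndepFamily (cartProdK G t) m) : m ≤ Fintype.card V := by
  obtain ⟨d, ρ, σ, hρ, hTr, hσ, hsum, horth⟩ := h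
  set A : Fin m → V → Matrix (Fin d) (Fin d) ℂ := fun i v => ∑ j, σ i (v, j)
  have hA_nonneg : ∀ i v, 0 ≤ A i v := fun i v =>
    Finset.sum_nonneg fun j _ => (hσ i (v, j)).nonneg
  have hA_sum : ∀ i, ∑ v, A i v = ρ := fun i => by rw [← hsum i, Fintype.sum_prod_type]
  have hA_le : ∀ i v, A i v ≤ ρ := fun i v =>
    hA_sum i ▸ Finset.single_le_sum (fun w _ => hA_nonneg i w) (Finset.mem_univ v)
  have hA_orth : ∀ v, Pairwise fun i j => A i v * A j v = 0 := by
    intro v i j hij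
    simp only [A, Finset.sum_mul_sum]
    refine Finset.sum_eq_zero fun a _ => Finset.sum_eq_zero fun b _ => horth i j _ _ hij ?_
    by_cases hab : a = b
    exacts [Or.inl (by rw [hab]), Or.inr (Or.inr ⟨rfl, hab⟩)]
  have hbound : ∀ v, ∑ i, (A i v).trace ≤ 1 := fun v =>
    hTr ▸ Matrix.sum_trace_le_trace hρ.nonneg
      (fun i => IsSelfAdjoint.of_nonneg (hA_nonneg i v)) (fun i => hA_le i v) (hA_orth v)
  have hm : (m : ℂ) ≤ Fintype.card V :=
    calc (m : ℂ) = ∑ i : Fin m, ρ.trace := by simp [hTr]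
      _ = ∑ v, ∑ i, (A i v).trace := by
        rw [Finset.sum_comm]
        exact Finset.sum_congr rfl fun i _ => by rw [← trace_sum, hA_sum]
      _ ≤ ∑ _v : V, 1 := Finset.sum_le_sum fun v _ => hbound v
      _ = Fintype.card V := by simp
  exact_mod_cast hm

theorem qIndep_cartProdK_qChrom_general {V : Type} [Fintype V] (G : SimpleGraph V)
    (t : ℕ) (ht : t = qChromNum G) :
    qIndepNum (cartProdK G t) = Fintype.card V := by
  have hcol : QColorable G t := ht ▸ qColorable_qChromNum G
  have hbdd : ∀ m ∈ {m | HasQIndepFamily (cartProdK G t) m}, m ≤ Fintype.card V :=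
    fun m => le_card_of_hasQIndepFamily_cartProdK
  exact le_antisymm (csSup_le' hbdd) (le_csSup ⟨_, hbdd⟩ (hasQIndepFamily_cartProdK_card hcol))

/-- if `t = χ*(G)` then `α*(G □ K_t) = |V(G)|`. -/
theorem qIndep_cartProdK_qChrom {V : Type} [Fintype V] [Nonempty V] (G : SimpleGraph V)
    (t : ℕ) (ht : t = qChromNum G) :
    qIndepNum (cartProdK G t) = Fintype.card V :=
  qIndep_cartProdK_qChrom_general G t ht

end ZeroError
end
end

section
/- Let k be a positive integer that is a multiple of four but not a power of two, and let Ω_k be the orthogonality graph. Then α*(Ω_k^{+k}) > k · α*(Ω_k); that is, k cooperating senders sharing entanglement can transmit strictly more messages jointly than k times what a single sender can transmit with entanglement. -/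
open scoped BigOperators ComplexOrder
open Matrix

noncomputable section

namespace ZeroError

variable {V W : Type*}

/-!
The upper bound is a Lovász-theta argument. Let `W` be a real matrix supported on the diagonal and
the edges of `G`, with entries at most `λ`, such that `W - J` is positive semidefinite. Pairing
`W - J` with the Gram matrix of the operators `Z u = ∑ i, σ i u` of an entanglement-assisted code
with `m` messages gives `m² Tr ρ² ≤ ∑ W u v Tr (Z u Z v)`, and the orthogonality relations split
the right-hand side into `m` parts, each at most `λ Tr ρ²`; hence `α*(G) ≤ λ`. For `Ω_k` with
`4 ∣ k` one can take `W = λ I + c A` with `λ = 2^k / k`: then `W - J` is a convolution matrix on the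
group `{±1}^k`, its eigenvalues are Walsh coefficients, which are Krawtchouk numbers, and their
nonnegativity comes down to `(2n - 1) C(n, s) ≤ C(2n, 2s)` for `k = 2n`. So `k α*(Ω_k) ≤ 2^k`, and equality is
impossible because `k` is not a power of two.

For the lower bound the `k` senders share the maximally mixed state on `ℂ^k`, and message
`x ∈ {±1}^k` is sent through copy `c` with the rank-one operator along `diag(x) f_c`, where `f_c`
is the `c`-th Fourier basis vector. For fixed `x` these vectors form an orthogonal basis, and since all entries of
`f_c` have the same modulus, `x ⊥ y` makes `diag(x) f_c ⊥ diag(y) f_c`. Hence all `2^k` messages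
can be sent: `α*(Ω_k^{+k}) ≥ 2^k`.
-/

open Finset

section PositiveSemidefinite

variable {ι n : Type*} [Fintype ι] [Fintype n]

theorem trace_mul_nonneg_of_posSemidef {P Q : Matrix n n ℂ} (hP : P.PosSemidef)
    (hQ : Q.PosSemidef) : 0 ≤ (P * Q).trace := by
  classical
  open scoped MatrixOrder in
  obtain ⟨B, rfl⟩ := CStarAlgebra.nonneg_iff_eq_star_mul_self.mp hP.nonneg
  rw [star_eq_conjTranspose, Matrix.mul_assoc, trace_mul_comm]
  exact (hQ.mul_mul_conjTranspose_same B).trace_nonneg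

theorem trace_mul_eq_sum_sum {R : Type*} [NonUnitalNonAssocSemiring R] (A B : Matrix ι ι R) :
    (A * B).trace = ∑ u, ∑ v, A u v * B v u := by
  simp [Matrix.trace, mul_apply]

theorem posSemidef_of_trace_mul {Z : ι → Matrix n n ℂ} (hZ : ∀ u, (Z u).IsHermitian) :
    (Matrix.of fun u v => (Z u * Z v).trace).PosSemidef := by
  have : (Matrix.of fun u v => (Z u * Z v).trace) =
      ∑ p : n × n, vecMulVec (star fun u => Z u p.1 p.2) fun u => Z u p.1 p.2 := by
    ext u v
    simp only [of_apply, Matrix.trace, Matrix.diag, mul_apply, Matrix.sum_apply, vecMulVec_apply,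
      Pi.star_apply, Fintype.sum_prod_type]
    rw [sum_comm]
    refine sum_congr rfl fun p _ => sum_congr rfl fun q _ => ?_
    rw [← (hZ u).apply q p]
  rw [this]
  exact posSemidef_sum _ fun p _ => posSemidef_vecMulVec_star_self _

theorem posSemidef_card_smul_one_sub_ones {V : Type*} [Fintype V] [DecidableEq V] :
    ((Fintype.card V : ℂ) • (1 : Matrix V V ℂ) - Matrix.of fun _ _ => 1).PosSemidef := by
  have : (Fintype.card V : ℂ) • (1 : Matrix V V ℂ) - Matrix.of (fun _ _ => 1) =
      ∑ p : V × V, (1 / 2 : ℂ) • vecMulVec (Pi.single p.1 1 - Pi.single p.2 1)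
        (star (Pi.single p.1 1 - Pi.single p.2 1)) := by
    ext a b
    simp [Matrix.sum_apply, vecMulVec_apply, Pi.single_apply, Matrix.one_apply,
      Fintype.sum_prod_type, mul_sub, sum_sub_distrib]
    split_ifs <;> simp <;> ring
  rw [this]
  exact posSemidef_sum _ fun p _ => (posSemidef_vecMulVec_self_star _).smul
    (by rw [Complex.nonneg_iff]; norm_num)

end PositiveSemidefinite

section QIndepSystem

variable {V n : Type*} [Fintype V] [Fintype n] {m : ℕ}

/-- The predicate in the definition of `qIndepNum`: `m` messages can be sent with zero error
through `G` using the shared state `ρ`. -/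
structure QIndepSystem (G : SimpleGraph V) (ρ : Matrix n n ℂ) (σ : Fin m → V → Matrix n n ℂ) :
    Prop where
  posSemidef_state : ρ.PosSemidef
  trace_state : ρ.trace = 1
  posSemidef : ∀ i u, (σ i u).PosSemidef
  sum_eq : ∀ i, ∑ u, σ i u = ρ
  mul_eq_zero : ∀ i j u v, i ≠ j → (u = v ∨ G.Adj u v) → σ i u * σ j v = 0

namespace QIndepSystem

variable {G : SimpleGraph V} {ρ : Matrix n n ℂ} {σ : Fin m → V → Matrix n n ℂ}

theorem sum_sum_trace_mul (h : QIndepSystem G ρ σ) (i : Fin m) :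
    ∑ u, ∑ v, (σ i u * σ i v).trace = (ρ * ρ).trace := by
  simp only [← trace_sum, ← Matrix.mul_sum, ← Matrix.sum_mul, h.sum_eq]

theorem sum_sum_trace_sum_mul_sum (h : QIndepSystem G ρ σ) :
    ∑ u, ∑ v, ((∑ i, σ i u) * ∑ j, σ j v).trace = (m : ℂ) ^ 2 * (ρ * ρ).trace := by
  simp only [← trace_sum, ← Matrix.mul_sum, ← Matrix.sum_mul]
  rw [sum_comm (γ := V), sum_congr rfl fun i _ => h.sum_eq i, sum_const, card_univ,
    Fintype.card_fin, smul_mul_smul, trace_smul, nsmul_eq_mul]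
  push_cast
  ring

theorem trace_sum_mul_sum (h : QIndepSystem G ρ σ) {u v : V} (huv : u = v ∨ G.Adj u v) :
    ((∑ i, σ i u) * ∑ j, σ j v).trace = ∑ i, (σ i u * σ i v).trace := by
  simp only [Matrix.sum_mul, Matrix.mul_sum, trace_sum]
  refine sum_congr rfl fun i _ => sum_eq_single i (fun j _ hji => ?_) (by simp)
  rw [h.mul_eq_zero j i u v hji huv, trace_zero]

theorem trace_mul_self_state_pos (h : QIndepSystem G ρ σ) : 0 < (ρ * ρ).trace := by
  refine (trace_mul_nonneg_of_posSemidef h.posSemidef_state h.posSemidef_state).lt_of_ne' ?_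
  nth_rw 1 [← h.posSemidef_state.1.eq]
  rw [Ne, trace_conjTranspose_mul_self_eq_zero_iff]
  rintro rfl
  simpa using h.trace_state

theorem le_of_posSemidef (h : QIndepSystem G ρ σ) {W : Matrix V V ℂ} {lam : ℝ} (hlam : 0 ≤ lam)
    (hW : (W - Matrix.of fun _ _ => 1).PosSemidef)
    (hWle : ∀ u v, W u v ≤ lam) (hWG : ∀ u v, W u v ≠ 0 → u = v ∨ G.Adj u v) :
    (m : ℝ) ≤ lam := by
  rcases Nat.eq_zero_or_pos m with rfl | hm
  · simpa using hlam
  set Z : V → Matrix n n ℂ := fun u => ∑ i, σ i u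
  have hgram : 0 ≤ ∑ u, ∑ v, (W u v - 1) * (Z u * Z v).trace := by
    have := trace_mul_nonneg_of_posSemidef hW <| posSemidef_of_trace_mul (Z := Z) fun u =>
      isSelfAdjoint_sum _ fun i _ => (h.posSemidef i u).1
    rw [trace_mul_eq_sum_sum] at this
    refine this.trans_eq (sum_congr rfl fun u _ => sum_congr rfl fun v _ => ?_)
    rw [Matrix.sub_apply, of_apply, of_apply, trace_mul_comm]
  have hsplit : ∀ u v, W u v * (Z u * Z v).trace = ∑ i, W u v * (σ i u * σ i v).trace := by
    intro u v
    by_cases hWuv : W u v = 0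
    · simp [hWuv]
    · rw [h.trace_sum_mul_sum (hWG u v hWuv), mul_sum]
  have hmsg : ∀ i, ∑ u, ∑ v, W u v * (σ i u * σ i v).trace ≤ lam * (ρ * ρ).trace := by
    intro i
    simp only [← h.sum_sum_trace_mul i, mul_sum]
    refine sum_le_sum fun u _ => sum_le_sum fun v _ => ?_
    exact mul_le_mul_of_nonneg_right (hWle u v)
      (trace_mul_nonneg_of_posSemidef (h.posSemidef i u) (h.posSemidef i v))
  have hF : (m : ℂ) ^ 2 * (ρ * ρ).trace ≤ (m : ℂ) * (lam * (ρ * ρ).trace) := by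
    calc (m : ℂ) ^ 2 * (ρ * ρ).trace = ∑ u, ∑ v, (Z u * Z v).trace :=
          h.sum_sum_trace_sum_mul_sum.symm
      _ ≤ ∑ u, ∑ v, W u v * (Z u * Z v).trace := by
        simp only [sub_mul, one_mul, sum_sub_distrib] at hgram
        exact sub_nonneg.mp hgram
      _ = ∑ i, ∑ u, ∑ v, W u v * (σ i u * σ i v).trace := by
        simp only [hsplit]
        exact (sum_congr rfl fun u _ => sum_comm).trans sum_comm
      _ ≤ ∑ _i : Fin m, (lam * (ρ * ρ).trace : ℂ) := sum_le_sum fun i _ => hmsg i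
      _ = (m : ℂ) * (lam * (ρ * ρ).trace) := by simp
  obtain ⟨F, hF0, hFeq⟩ := RCLike.pos_iff_exists_ofReal.mp h.trace_mul_self_state_pos
  rw [← hFeq, ← RCLike.ofReal_eq_complex_ofReal] at hF
  have hF' : (m : ℝ) ^ 2 * F ≤ m * (lam * F) := Complex.real_le_real.mp (by push_cast; exact hF)
  exact le_of_mul_le_mul_left (a := m * F) (by linarith) (by positivity)

theorem le_card (h : QIndepSystem G ρ σ) : m ≤ Fintype.card V := by
  classical
  have := h.le_of_posSemidef (W := (Fintype.card V : ℂ) • 1) (lam := Fintype.card V)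
    (Nat.cast_nonneg _) posSemidef_card_smul_one_sub_ones (fun u v => ?_) (fun u v huv => ?_)
  · exact_mod_cast this
  · by_cases huv : u = v <;> simp [huv]
  · by_cases h : u = v <;> simp_all

end QIndepSystem

theorem qIndepNum_le {G : SimpleGraph V} {N : ℕ}
    (h : ∀ (d m : ℕ) (ρ : Matrix (Fin d) (Fin d) ℂ) (σ : Fin m → V → Matrix (Fin d) (Fin d) ℂ),
      QIndepSystem G ρ σ → m ≤ N) :
    qIndepNum G ≤ N :=
  csSup_le' fun m ⟨d, ρ, σ, h₁, h₂, h₃, h₄, h₅⟩ => h d m ρ σ ⟨h₁, h₂, h₃, h₄, h₅⟩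

theorem QIndepSystem.le_qIndepNum {G : SimpleGraph V} {d : ℕ} {ρ : Matrix (Fin d) (Fin d) ℂ}
    {σ : Fin m → V → Matrix (Fin d) (Fin d) ℂ} (h : QIndepSystem G ρ σ) : m ≤ qIndepNum G :=
  le_csSup ⟨Fintype.card V, fun _ ⟨_, _, _, h₁, h₂, h₃, h₄, h₅⟩ =>
      QIndepSystem.le_card ⟨h₁, h₂, h₃, h₄, h₅⟩⟩
    ⟨d, ρ, σ, h.1, h.2, h.3, h.4, h.5⟩

theorem card_le_qIndepNum_copies {G : SimpleGraph V} {ℓ d : ℕ}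
    {ρ : Matrix (Fin d) (Fin d) ℂ} (hρ : ρ.PosSemidef) (htr : ρ.trace = 1)
    {P : V → Fin ℓ → Matrix (Fin d) (Fin d) ℂ} (hP : ∀ u c, (P u c).PosSemidef)
    (hsum : ∀ u, ∑ c, P u c = ρ) (horth : ∀ u v c, G.Adj u v → P u c * P v c = 0) :
    Fintype.card V ≤ qIndepNum (copies G ℓ) := by
  classical
  let e := (Fintype.equivFin V).symm
  refine QIndepSystem.le_qIndepNum (σ := fun i x => if x.1 = e i then P x.1 x.2 else 0)
    ⟨hρ, htr, fun i x => ?_, fun i => ?_, fun i j x y hij hxy => ?_⟩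
  · split_ifs
    exacts [hP _ _, .zero]
  · simp [Fintype.sum_prod_type, hsum]
  · split_ifs with hx hy
    · rcases hxy with rfl | ⟨hc, hadj⟩
      · exact absurd (e.injective (hx.symm.trans hy)) hij
      · rw [hc]; exact horth _ _ _ hadj
    all_goals simp

end QIndepSystem

section Krawtchouk

open Polynomial

def krawtchouk (k w q : ℕ) : ℤ := ((1 - X) ^ w * (1 + X) ^ (k - w) : ℤ[X]).coeff q

theorem prod_neg_one_pow_card_inter {k : ℕ} (S T : Finset (Fin k)) :
    ∏ i ∈ T, (if i ∈ S then -1 else 1 : ℤ) = (-1) ^ #(S ∩ T) := by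
  rw [prod_ite_mem, prod_const, inter_comm]

theorem sum_powersetCard_neg_one_pow_card_inter {k : ℕ} (S : Finset (Fin k)) (q : ℕ) :
    ∑ T ∈ powersetCard q univ, (-1 : ℤ) ^ #(S ∩ T) = krawtchouk k #S q := by
  set a : Fin k → ℤ := fun i => if i ∈ S then -1 else 1
  have hprod : ((1 - X) ^ #S * (1 + X) ^ (k - #S) : ℤ[X]) = ∏ i, (1 + C (a i) * X) := by
    rw [prod_congr rfl fun i _ => show 1 + C (a i) * X = if i ∈ S then 1 - X else 1 + X by
      simp only [a]; split_ifs <;> simp [sub_eq_add_neg]]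
    rw [prod_ite, prod_const, prod_const, filter_mem_eq_inter, univ_inter,
      filter_notMem_eq_sdiff, ← compl_eq_univ_sdiff, card_compl, Fintype.card_fin]
  have hexp : (∏ i, (1 + C (a i) * X) : ℤ[X]) =
      ∑ T : Finset (Fin k), C (∏ i ∈ T, a i) * X ^ #T := by
    rw [prod_one_add, powerset_univ]
    refine sum_congr rfl fun T _ => ?_
    rw [prod_mul_distrib, prod_const, map_prod]
  rw [krawtchouk, hprod, hexp, finsetSum_coeff]
  simp only [coeff_C_mul_X_pow, a, prod_neg_one_pow_card_inter]
  rw [powersetCard_eq_filter, sum_filter, powerset_univ]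
  exact sum_congr rfl fun T _ => if_congr eq_comm rfl rfl

theorem krawtchouk_zero (k q : ℕ) : krawtchouk k 0 q = k.choose q := by
  simp [krawtchouk, Polynomial.coeff_one_add_X_pow]

theorem choose_mul_krawtchouk_comm (k w q : ℕ) :
    (k.choose w : ℤ) * krawtchouk k w q = k.choose q * krawtchouk k q w := by
  have hsum : ∀ w q, ∑ W ∈ powersetCard w (univ : Finset (Fin k)),
      ∑ T ∈ powersetCard q univ, (-1 : ℤ) ^ #(W ∩ T) = k.choose w * krawtchouk k w q := by
    intro w q
    rw [sum_congr rfl fun W hW => by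
      rw [sum_powersetCard_neg_one_pow_card_inter, (mem_powersetCard_univ.mp hW)]]
    simp
  rw [← hsum, ← hsum, sum_comm]
  simp only [inter_comm]

theorem krawtchouk_two_mul_self (n w : ℕ) :
    krawtchouk (2 * n) n w = if Even w then (-1) ^ (w / 2) * (n.choose (w / 2) : ℤ) else 0 := by
  have hpoly : ((1 - X) ^ n * (1 + X) ^ (2 * n - n) : ℤ[X]) =
      ∑ j ∈ range (n + 1), C ((-1) ^ j * n.choose j : ℤ) * X ^ (2 * j) := by
    rw [two_mul, Nat.add_sub_cancel, ← mul_pow,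
      show ((1 - X) * (1 + X) : ℤ[X]) = -X ^ 2 + 1 by ring, add_pow]
    refine sum_congr rfl fun j _ => ?_
    rw [neg_pow, ← pow_mul, one_pow, mul_one, map_mul, map_pow, map_neg, map_one, map_natCast]
    ring
  rw [krawtchouk, hpoly, finsetSum_coeff]
  simp only [coeff_C_mul_X_pow]
  split_ifs with hw
  · obtain ⟨j, rfl⟩ := hw
    rw [show (j + j) / 2 = j by omega]
    by_cases hj : j ≤ n
    · rw [sum_eq_single j (fun i _ hi => if_neg (by omega)) (by simp; omega), if_pos (by omega)]
    · rw [Nat.choose_eq_zero_of_lt (by omega), sum_eq_zero fun i hi => if_neg ?_]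
      · simp
      · simp at hi; omega
  · exact sum_eq_zero fun i _ => if_neg fun h => hw ⟨i, by omega⟩

theorem two_mul_sub_one_mul_choose_le_of_le {n s : ℕ} (hs : 1 ≤ s) (hsn : 2 * s ≤ n + 1) :
    (2 * n - 1) * n.choose s ≤ (2 * n).choose (2 * s) := by
  induction s, hs using Nat.le_induction with
  | base =>
    rw [Nat.choose_one_right, Nat.choose_two_right, mul_assoc, Nat.mul_div_cancel_left _ two_pos,
      mul_comm]
  | succ s hs ih =>
    obtain ⟨t, rfl⟩ : ∃ t, n = 2 * s + 1 + t := ⟨n - (2 * s + 1), by omega⟩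
    have ih := ih (by omega)
    have e1 := Nat.choose_succ_right_eq (2 * (2 * s + 1 + t)) (2 * s + 1)
    have e2 := Nat.choose_succ_right_eq (2 * (2 * s + 1 + t)) (2 * s)
    have e3 := Nat.choose_succ_right_eq (2 * s + 1 + t) s
    rw [show 2 * (2 * s + 1 + t) - (2 * s + 1) = 2 * s + 1 + 2 * t by omega] at e1
    rw [show 2 * (2 * s + 1 + t) - 2 * s = 2 * (s + 1 + t) by omega] at e2
    rw [show 2 * s + 1 + t - s = s + 1 + t by omega] at e3
    rw [show 2 * (2 * s + 1 + t) - 1 = 4 * s + 1 + 2 * t by omega] at ih ⊢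
    rw [show 2 * (s + 1) = 2 * s + 1 + 1 by ring]
    refine Nat.le_of_mul_le_mul_right (c := (2 * s + 1) * (2 * s + 2)) ?_ (by positivity)
    set c := (2 * (2 * s + 1 + t)).choose (2 * s)
    set b := (2 * (2 * s + 1 + t)).choose (2 * s + 1)
    calc (4 * s + 1 + 2 * t) * (2 * s + 1 + t).choose (s + 1) * ((2 * s + 1) * (2 * s + 2))
        = 2 * (2 * s + 1) * (4 * s + 1 + 2 * t) * ((2 * s + 1 + t).choose (s + 1) * (s + 1)) := by
          ring
      _ = 2 * (2 * s + 1) * ((4 * s + 1 + 2 * t) * (2 * s + 1 + t).choose s) * (s + 1 + t) := by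
          rw [e3]; ring
      _ ≤ 2 * (2 * s + 1) * c * (s + 1 + t) := by gcongr
      _ = c * (2 * (s + 1 + t)) * (2 * s + 1) := by ring
      _ ≤ c * (2 * (s + 1 + t)) * (2 * s + 1 + 2 * t) := Nat.mul_le_mul_left _ (by omega)
      _ = b * (2 * s + 1 + 2 * t) * (2 * s + 1) := by rw [← e2]; ring
      _ = (2 * (2 * s + 1 + t)).choose (2 * s + 1 + 1) * ((2 * s + 1) * (2 * s + 2)) := by
          rw [← e1]; ring

theorem two_mul_sub_one_mul_choose_le {n s : ℕ} (hs : 1 ≤ s) (hsn : s < n) :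
    (2 * n - 1) * n.choose s ≤ (2 * n).choose (2 * s) := by
  by_cases h : 2 * s ≤ n + 1
  · exact two_mul_sub_one_mul_choose_le_of_le hs h
  · have := two_mul_sub_one_mul_choose_le_of_le (n := n) (s := n - s) (by omega) (by omega)
    rwa [Nat.choose_symm hsn.le, show 2 * (n - s) = 2 * n - 2 * s by omega,
      Nat.choose_symm (by omega)] at this

theorem neg_choose_le_mul_krawtchouk_two_mul_self {n w : ℕ} (hn0 : 0 < n) (hn : Even n) :
    -((2 * n).choose w : ℤ) ≤ (2 * n - 1) * krawtchouk (2 * n) n w := by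
  have hn1 : (0 : ℤ) ≤ 2 * n - 1 := by omega
  rw [krawtchouk_two_mul_self]
  split_ifs with hw
  · obtain ⟨s, rfl⟩ := hw
    rw [show (s + s) / 2 = s by omega]
    rcases Nat.even_or_odd s with hs | hs
    · rw [hs.neg_one_pow, one_mul]
      exact (neg_nonpos.mpr (Nat.cast_nonneg _)).trans (mul_nonneg hn1 (Nat.cast_nonneg _))
    · rw [hs.neg_one_pow, neg_one_mul, mul_neg, neg_le_neg_iff]
      rcases lt_or_ge n s with hns | hsn
      · rw [Nat.choose_eq_zero_of_lt hns]
        simp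
      -- `s` is odd and `n` even, so `s < n`
      have hle := two_mul_sub_one_mul_choose_le (n := n) (s := s)
        (by obtain ⟨j, rfl⟩ := hs; omega) (by obtain ⟨j, rfl⟩ := hs; obtain ⟨i, rfl⟩ := hn; omega)
      rw [two_mul s] at hle
      have := (Nat.cast_le (α := ℤ)).mpr hle
      push_cast [show 1 ≤ 2 * n by omega] at this
      exact this
  · simp

theorem neg_choose_le_mul_krawtchouk {k w : ℕ} (hk0 : 0 < k) (hk : 4 ∣ k) (hw : w ≤ k) :
    -(k.choose (k / 2) : ℤ) ≤ (k - 1) * krawtchouk k w (k / 2) := by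
  obtain ⟨n, rfl, hn⟩ : ∃ n, k = 2 * n ∧ Even n := by
    obtain ⟨p, rfl⟩ := hk
    exact ⟨2 * p, by ring, even_two_mul p⟩
  rw [Nat.mul_div_cancel_left n two_pos]
  have hpos : (0 : ℤ) < (2 * n).choose w := by exact_mod_cast Nat.choose_pos hw
  refine le_of_mul_le_mul_left ?_ hpos
  calc ((2 * n).choose w : ℤ) * -((2 * n).choose n : ℤ)
      = (2 * n).choose n * -((2 * n).choose w : ℤ) := by ring
    _ ≤ (2 * n).choose n * ((2 * n - 1) * krawtchouk (2 * n) n w) :=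
        mul_le_mul_of_nonneg_left (neg_choose_le_mul_krawtchouk_two_mul_self (by omega) hn)
          (Nat.cast_nonneg _)
    _ = (2 * n).choose w * ((↑(2 * n) - 1) * krawtchouk (2 * n) w n) := by
        rw [mul_left_comm, ← choose_mul_krawtchouk_comm]
        push_cast
        ring

end Krawtchouk

namespace PMVertex

variable {k : ℕ}

instance : DecidableEq (PMVertex k) := inferInstanceAs (DecidableEq {_u : Fin k → ℤ // _})

instance : One (PMVertex k) := ⟨⟨fun _ => 1, fun _ => Or.inl rfl⟩⟩

instance : Mul (PMVertex k) :=
  ⟨fun u v => ⟨fun i => u.val i * v.val i, fun i => by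
    rcases u.prop i with hu | hu <;> rcases v.prop i with hv | hv <;> simp [hu, hv]⟩⟩

@[simp] theorem val_one (i : Fin k) : (1 : PMVertex k).val i = 1 := rfl

@[simp] theorem val_mul (u v : PMVertex k) (i : Fin k) : (u * v).val i = u.val i * v.val i := rfl

theorem val_mul_self (u : PMVertex k) (i : Fin k) : u.val i * u.val i = 1 := by
  rcases u.prop i with h | h <;> simp [h]

theorem mul_eq_one_iff {u v : PMVertex k} : u * v = 1 ↔ u = v := by
  refine ⟨fun h => Subtype.ext (funext fun i => ?_), fun h => Subtype.ext (funext fun i => ?_)⟩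
  · have := congrArg (·.val i) h
    simp only [val_mul, val_one] at this
    rcases u.prop i with hu | hu <;> rcases v.prop i with hv | hv <;> simp_all
  · simp [h, val_mul_self]

def negSet (u : PMVertex k) : Finset (Fin k) := {i | u.val i = -1}

def ofNegSet (Z : Finset (Fin k)) : PMVertex k :=
  ⟨fun i => if i ∈ Z then -1 else 1, fun i => by dsimp only; split_ifs <;> simp⟩

theorem val_eq_ite (u : PMVertex k) (i : Fin k) : u.val i = if i ∈ u.negSet then -1 else 1 := by
  rcases u.prop i with h | h <;> simp [negSet, h]

@[simps]
def equivFinset : PMVertex k ≃ Finset (Fin k) where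
  toFun := negSet
  invFun := ofNegSet
  left_inv u := Subtype.ext (funext fun i => (u.val_eq_ite i).symm)
  right_inv Z := by ext i; by_cases h : i ∈ Z <;> simp [negSet, ofNegSet, h]

theorem negSet_one : (1 : PMVertex k).negSet = ∅ := by
  ext i; simp [negSet]

theorem negSet_ofNegSet (Z : Finset (Fin k)) : (ofNegSet Z).negSet = Z :=
  equivFinset.right_inv Z

theorem ofNegSet_eq_one_iff {Z : Finset (Fin k)} : ofNegSet Z = 1 ↔ Z = ∅ := by
  rw [← equivFinset_symm_apply, Equiv.symm_apply_eq, equivFinset_apply, negSet_one]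

theorem card_eq : Fintype.card (PMVertex k) = 2 ^ k := by
  simp [Fintype.card_congr equivFinset]

theorem sum_val_mul_val (u v : PMVertex k) :
    ∑ i, u.val i * v.val i = k - 2 * #(u * v).negSet := by
  have : ∀ i, (u * v).val i = 1 - 2 * if i ∈ (u * v).negSet then 1 else 0 := fun i => by
    rw [val_eq_ite]; split_ifs <;> norm_num
  simp only [← val_mul, this, sum_sub_distrib, ← mul_sum, sum_boole]
  simp

def walsh (S : Finset (Fin k)) (u : PMVertex k) : ℂ := ∏ i ∈ S, (u.val i : ℂ)

@[simp] theorem walsh_one (S : Finset (Fin k)) : walsh S 1 = 1 := by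
  simp [walsh]

theorem walsh_mul (S : Finset (Fin k)) (u v : PMVertex k) :
    walsh S (u * v) = walsh S u * walsh S v := by
  simp [walsh, prod_mul_distrib]

theorem star_walsh (S : Finset (Fin k)) : star (walsh S) = walsh S := by
  ext u; simp [walsh]

theorem walsh_eq_neg_one_pow (S : Finset (Fin k)) (u : PMVertex k) :
    walsh S u = (-1) ^ #(S ∩ u.negSet) := by
  simp only [walsh, val_eq_ite u]
  push_cast
  rw [prod_ite_mem, prod_const]

theorem walsh_ofNegSet_comm (S T : Finset (Fin k)) :
    walsh S (ofNegSet T) = walsh T (ofNegSet S) := by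
  rw [walsh_eq_neg_one_pow, walsh_eq_neg_one_pow, negSet_ofNegSet, negSet_ofNegSet,
    inter_comm]

theorem sum_walsh_apply (z : PMVertex k) :
    ∑ S, walsh S z = if z = 1 then 2 ^ k else 0 := by
  simp only [walsh]
  rw [← powerset_univ, ← prod_one_add]
  split_ifs with hz
  · simp [hz]
    norm_num
  · obtain ⟨i, hi⟩ : ∃ i, z.val i = -1 := by
      by_contra! h
      exact hz (Subtype.ext (funext fun i => (z.prop i).resolve_right (h i)))
    exact prod_eq_zero (mem_univ i) (by simp [hi])

theorem sum_walsh (S : Finset (Fin k)) :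
    ∑ z, walsh S z = if S = ∅ then 2 ^ k else 0 := by
  rw [← equivFinset.symm.sum_comp]
  simp only [equivFinset_symm_apply, walsh_ofNegSet_comm S, sum_walsh_apply,
    ofNegSet_eq_one_iff]

theorem sum_walsh_of_card_negSet (S : Finset (Fin k)) (q : ℕ) :
    ∑ z with #z.negSet = q, walsh S z = krawtchouk k #S q := by
  rw [← sum_powersetCard_neg_one_pow_card_inter, sum_filter, ← equivFinset.symm.sum_comp,
    powersetCard_eq_filter, sum_filter, powerset_univ]
  push_cast
  simp [walsh_eq_neg_one_pow, negSet_ofNegSet]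

def walshCoeff (f : PMVertex k → ℂ) (S : Finset (Fin k)) : ℂ := ∑ z, f z * walsh S z

theorem convolution_eq_sum (f : PMVertex k → ℂ) :
    (Matrix.of fun u v => f (u * v)) =
      ∑ S, ((2 ^ k : ℂ)⁻¹ * walshCoeff f S) • vecMulVec (walsh S) (walsh S) := by
  ext u v
  have horth : ∀ z, ∑ S, walsh S z * (walsh S u * walsh S v) =
      if z = u * v then 2 ^ k else 0 := fun z => by
    simp only [← walsh_mul, sum_walsh_apply, mul_eq_one_iff]
  calc f (u * v) = (2 ^ k : ℂ)⁻¹ * ∑ z, f z * ∑ S, walsh S z * (walsh S u * walsh S v) := by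
        simp [horth]
        field_simp
    _ = _ := by
        simp only [Matrix.sum_apply, Matrix.smul_apply, vecMulVec_apply, smul_eq_mul, walshCoeff,
          mul_sum, sum_mul]
        rw [sum_comm]
        exact sum_congr rfl fun S _ => sum_congr rfl fun z _ => by ring

theorem posSemidef_of_walshCoeff_nonneg {f : PMVertex k → ℂ} (hf : ∀ S, 0 ≤ walshCoeff f S) :
    (Matrix.of fun u v => f (u * v)).PosSemidef := by
  rw [convolution_eq_sum]
  refine posSemidef_sum _ fun S _ => ?_
  have h2 : (0 : ℂ) ≤ (2 ^ k)⁻¹ := by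
    rw [show (2 ^ k : ℂ)⁻¹ = ((2 ^ k)⁻¹ : ℝ) by push_cast; rfl]
    exact Complex.zero_le_real.mpr (by positivity)
  simpa [star_walsh] using
    (posSemidef_vecMulVec_self_star (walsh S)).smul (mul_nonneg h2 (hf S))

end PMVertex

theorem orthGraph_adj_iff {k : ℕ} (hk : Even k) (hk0 : 0 < k) {u v : PMVertex k} :
    (orthGraph k).Adj u v ↔ #(u * v).negSet = k / 2 := by
  obtain ⟨j, rfl⟩ := hk
  have hsum : ∑ i, u.val i * v.val i = 0 ↔ #(u * v).negSet = (j + j) / 2 := by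
    rw [PMVertex.sum_val_mul_val]
    omega
  refine ⟨fun h => hsum.mp h.2, fun h => ⟨?_, hsum.mpr h⟩⟩
  rintro rfl
  rw [PMVertex.mul_eq_one_iff.mpr rfl, PMVertex.negSet_one, card_empty] at h
  omega

section OrthCertificate

open PMVertex

variable {k : ℕ}

def orthCertDiag (k : ℕ) : ℝ := 2 ^ k / k

def orthCertEdge (k : ℕ) : ℝ := orthCertDiag k * (k - 1) / k.choose (k / 2)

/-- `W u v = orthCert k (u * v)` is the dual certificate `λ I + c A` for `Ω_k`: `λ = 2^k / k` is
the Lovász theta number of `Ω_k`, and `c` is chosen so that the Walsh coefficient of `W - J` at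
`S = ∅` vanishes. -/
def orthCert (k : ℕ) (z : PMVertex k) : ℝ :=
  (if z = 1 then orthCertDiag k else 0) + if #z.negSet = k / 2 then orthCertEdge k else 0

theorem orthCertDiag_nonneg : 0 ≤ orthCertDiag k := by
  unfold orthCertDiag; positivity

theorem choose_half_pos : (0 : ℝ) < k.choose (k / 2) := by
  exact_mod_cast Nat.choose_pos (Nat.div_le_self k 2)

theorem orthCertEdge_mul_choose :
    orthCertEdge k * k.choose (k / 2) = orthCertDiag k * (k - 1) :=
  div_mul_cancel₀ _ choose_half_pos.ne'

theorem orthCertEdge_nonneg (hk0 : 0 < k) : 0 ≤ orthCertEdge k := by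
  have hk1 : (1 : ℝ) ≤ k := by exact_mod_cast hk0
  exact div_nonneg (mul_nonneg orthCertDiag_nonneg (by linarith)) choose_half_pos.le

theorem orthCertEdge_le : orthCertEdge k ≤ orthCertDiag k := by
  have hCk : (k : ℝ) ≤ k.choose (k / 2) := by
    exact_mod_cast (Nat.choose_one_right k).symm.trans_le (Nat.choose_le_middle 1 k)
  rw [orthCertEdge, div_le_iff₀ choose_half_pos]
  exact mul_le_mul_of_nonneg_left (by linarith) orthCertDiag_nonneg

theorem walshCoeff_orthCert (S : Finset (Fin k)) :
    walshCoeff (fun z => (orthCert k z : ℂ) - 1) S = ((orthCertDiag k +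
      orthCertEdge k * krawtchouk k #S (k / 2) - if S = ∅ then 2 ^ k else 0 : ℝ) : ℂ) := by
  have hsplit : walshCoeff (fun z => (orthCert k z : ℂ) - 1) S =
      orthCertDiag k * walsh S 1 + orthCertEdge k * ∑ z with #z.negSet = k / 2, walsh S z -
        ∑ z, walsh S z := by
    simp only [walshCoeff, orthCert, Complex.ofReal_add, apply_ite ((↑) : ℝ → ℂ),
      Complex.ofReal_zero, sub_mul, add_mul, one_mul, ite_mul, zero_mul, sum_sub_distrib,
      sum_add_distrib, sum_ite_eq', mem_univ, if_true, ← sum_filter, mul_sum]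
  rw [hsplit, walsh_one, sum_walsh_of_card_negSet, sum_walsh]
  split_ifs <;> push_cast <;> ring

theorem walshCoeff_orthCert_nonneg (hk0 : 0 < k) (hk : 4 ∣ k) (S : Finset (Fin k)) :
    0 ≤ orthCertDiag k + orthCertEdge k * krawtchouk k #S (k / 2) -
      if S = ∅ then 2 ^ k else 0 := by
  split_ifs with hS
  · have hdiag : orthCertDiag k * k = 2 ^ k := div_mul_cancel₀ _ (by exact_mod_cast hk0.ne')
    rw [hS, card_empty, krawtchouk_zero, Int.cast_natCast, orthCertEdge_mul_choose]
    linarith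
  · have hK : -(k.choose (k / 2) : ℝ) ≤ (k - 1) * (krawtchouk k #S (k / 2) : ℝ) := by
      exact_mod_cast neg_choose_le_mul_krawtchouk hk0 hk
        ((card_le_univ S).trans_eq (Fintype.card_fin k))
    have key : (orthCertDiag k + orthCertEdge k * krawtchouk k #S (k / 2)) * k.choose (k / 2) =
        orthCertDiag k * (k.choose (k / 2) + (k - 1) * krawtchouk k #S (k / 2)) := by
      rw [add_mul, mul_right_comm, orthCertEdge_mul_choose]
      ring
    rw [sub_zero]
    exact nonneg_of_mul_nonneg_left (key ▸ mul_nonneg orthCertDiag_nonneg (by linarith))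
      choose_half_pos

theorem posSemidef_orthCert_sub_ones (hk0 : 0 < k) (hk : 4 ∣ k) :
    ((Matrix.of fun u v => (orthCert k (u * v) : ℂ)) - Matrix.of fun _ _ => 1).PosSemidef := by
  convert posSemidef_of_walshCoeff_nonneg fun S => (walshCoeff_orthCert S).symm ▸
    Complex.zero_le_real.mpr (walshCoeff_orthCert_nonneg hk0 hk S) using 1
  ext u v
  simp

theorem orthCert_le (hk0 : 0 < k) (hk : 4 ∣ k) (z : PMVertex k) :
    orthCert k z ≤ orthCertDiag k := by
  have := orthCertEdge_nonneg hk0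
  have := orthCertEdge_le (k := k)
  unfold orthCert
  split_ifs with h1 h2
  · rw [h1, negSet_one, card_empty] at h2
    omega
  all_goals linarith

theorem orthCert_ne_zero (hk0 : 0 < k) (hk : 4 ∣ k) {u v : PMVertex k}
    (h : orthCert k (u * v) ≠ 0) : u = v ∨ (orthGraph k).Adj u v := by
  rw [orthGraph_adj_iff (even_iff_two_dvd.mpr (dvd_trans ⟨2, rfl⟩ hk)) hk0,
    ← mul_eq_one_iff]
  by_contra! hne
  simp [orthCert, hne.1, hne.2] at h

end OrthCertificate

theorem QIndepSystem.mul_le_two_pow_of_orthGraph {k m : ℕ} {n : Type*} [Fintype n]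
    {ρ : Matrix n n ℂ} {σ : Fin m → PMVertex k → Matrix n n ℂ} (hk0 : 0 < k) (hk : 4 ∣ k)
    (h : QIndepSystem (orthGraph k) ρ σ) : k * m ≤ 2 ^ k := by
  have hm := h.le_of_posSemidef orthCertDiag_nonneg (posSemidef_orthCert_sub_ones hk0 hk)
    (fun u v => Complex.real_le_real.mpr (orthCert_le hk0 hk _))
    (fun u v huv => orthCert_ne_zero hk0 hk (by simpa using huv))
  rw [orthCertDiag, le_div_iff₀ (by exact_mod_cast hk0)] at hm
  exact_mod_cast (by linarith : (k : ℝ) * m ≤ 2 ^ k)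

theorem _root_.IsPrimitiveRoot.sum_pow_mul_star_pow {ζ : ℂ} {k : ℕ} (hζ : IsPrimitiveRoot ζ k)
    (r s : Fin k) :
    ∑ c : Fin k, ζ ^ (r * c : ℕ) * star (ζ ^ (s * c : ℕ)) = if r = s then k else 0 := by
  have hk : k ≠ 0 := Fin.pos r |>.ne'
  have hζ0 : ζ ≠ 0 := hζ.ne_zero hk
  set ξ := ζ ^ (r : ℕ) * (ζ ^ (s : ℕ))⁻¹
  have hterm : ∀ c : ℕ, ζ ^ (r * c) * star (ζ ^ (s * c)) = ξ ^ c := by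
    intro c
    rw [star_pow, Complex.star_def, ← Complex.inv_eq_conj (hζ.norm'_eq_one hk)]
    simp only [ξ, mul_pow, inv_pow, ← pow_mul]
  simp only [hterm, Fin.sum_univ_eq_sum_range (ξ ^ ·) k]
  split_ifs with hrs
  · simp [ξ, hrs, hζ0]
  · have hξ : ξ ≠ 1 := by
      intro h
      refine hrs (Fin.ext (hζ.pow_inj r.isLt s.isLt ?_))
      rwa [mul_inv_eq_one₀ (pow_ne_zero _ hζ0)] at h
    rw [geom_sum_eq hξ, mul_pow, inv_pow, ← pow_mul, ← pow_mul, mul_comm (r : ℕ), mul_comm (s : ℕ),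
      pow_mul, pow_mul, hζ.pow_eq_one]
    simp

section FourierConstruction

variable {k : ℕ} {ζ : ℂ}

def fourierSignVec (ζ : ℂ) (x : PMVertex k) (c : Fin k) : Fin k → ℂ :=
  fun r => x.val r * ζ ^ (r * c : ℕ)

theorem sum_vecMulVec_fourierSignVec (hζ : IsPrimitiveRoot ζ k) (x : PMVertex k) :
    ∑ c, vecMulVec (fourierSignVec ζ x c) (star (fourierSignVec ζ x c)) = (k : ℂ) • 1 := by
  ext r s
  calc (∑ c, vecMulVec (fourierSignVec ζ x c) (star (fourierSignVec ζ x c))) r s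
      = (x.val r * x.val s : ℂ) * ∑ c : Fin k, ζ ^ (r * c : ℕ) * star (ζ ^ (s * c : ℕ)) := by
        simp only [Matrix.sum_apply, vecMulVec_apply, fourierSignVec, Pi.star_apply, star_mul',
          mul_sum]
        refine sum_congr rfl fun c _ => ?_
        simp only [star_intCast]
        ring
    _ = _ := by
        rw [hζ.sum_pow_mul_star_pow]
        split_ifs with h
        · subst h
          simp [← Int.cast_mul, PMVertex.val_mul_self]
        · simp [h]

theorem star_fourierSignVec_dotProduct (hζ : IsPrimitiveRoot ζ k) (x y : PMVertex k) (c : Fin k) :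
    star (fourierSignVec ζ x c) ⬝ᵥ fourierSignVec ζ y c = ∑ r, (x.val r * y.val r : ℂ) := by
  have hk : k ≠ 0 := Fin.pos c |>.ne'
  refine sum_congr rfl fun r _ => ?_
  have hunit : star (ζ ^ (r * c : ℕ)) * ζ ^ (r * c : ℕ) = 1 := by
    rw [star_pow, Complex.star_def, ← Complex.inv_eq_conj (hζ.norm'_eq_one hk), inv_pow,
      inv_mul_cancel₀ (pow_ne_zero _ (hζ.ne_zero hk))]
  simp only [fourierSignVec, Pi.star_apply, star_mul', star_intCast]
  linear_combination (x.val r * y.val r : ℂ) * hunit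

theorem two_pow_le_qIndepNum_copies_orthGraph (hk : 0 < k) :
    2 ^ k ≤ qIndepNum (copies (orthGraph k) k) := by
  obtain ⟨ζ, hζ⟩ : ∃ ζ : ℂ, IsPrimitiveRoot ζ k := ⟨_, Complex.isPrimitiveRoot_exp k hk.ne'⟩
  have hk' : (k : ℂ) ≠ 0 := by exact_mod_cast hk.ne'
  have hinv : ∀ j : ℕ, (0 : ℂ) ≤ ((k : ℂ) ^ j)⁻¹ := fun j => by
    rw [← Complex.ofReal_natCast, ← Complex.ofReal_pow, ← Complex.ofReal_inv]
    exact Complex.zero_le_real.mpr (by positivity)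
  rw [← PMVertex.card_eq]
  refine card_le_qIndepNum_copies (ρ := ((k : ℂ) ^ 1)⁻¹ • 1)
    (P := fun x c => ((k : ℂ) ^ 2)⁻¹ •
      vecMulVec (fourierSignVec ζ x c) (star (fourierSignVec ζ x c)))
    (PosSemidef.one.smul (hinv 1)) ?_ (fun x c => (posSemidef_vecMulVec_self_star _).smul (hinv 2))
    (fun x => ?_) (fun x y c hxy => ?_)
  · simp [hk']
  · rw [← smul_sum, sum_vecMulVec_fourierSignVec hζ, smul_smul]
    congr 1
    field_simp
  · rw [smul_mul_smul, vecMulVec_mul_vecMulVec, star_fourierSignVec_dotProduct hζ]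
    have := congrArg (Int.cast : ℤ → ℂ) hxy.2
    push_cast at this
    simp [this]

end FourierConstruction

theorem mul_qIndepNum_orthGraph_le {k : ℕ} (hk0 : 0 < k) (hk : 4 ∣ k) :
    k * qIndepNum (orthGraph k) ≤ 2 ^ k := by
  have : qIndepNum (orthGraph k) ≤ 2 ^ k / k := qIndepNum_le fun _ _ _ _ h =>
    (Nat.le_div_iff_mul_le hk0).mpr (by rw [mul_comm]; exact h.mul_le_two_pow_of_orthGraph hk0 hk)
  exact (Nat.mul_le_mul_left k this).trans (Nat.mul_div_le _ _)

/-- for `k` a positive multiple of four that is not a power of two,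
`α*(Ω_k^{+k}) > k · α*(Ω_k)`. -/
theorem orthGraph_joint_advantage (k : ℕ) (hpos : 0 < k) (h4 : 4 ∣ k)
    (hnp : ∀ m : ℕ, k ≠ 2 ^ m) :
    k * qIndepNum (orthGraph k) < qIndepNum (copies (orthGraph k) k) := by
  have hne : k * qIndepNum (orthGraph k) ≠ 2 ^ k := fun h => by
    obtain ⟨j, -, hj⟩ := (Nat.dvd_prime_pow Nat.prime_two).mp (Dvd.intro _ h)
    exact hnp j hj
  exact ((mul_qIndepNum_orthGraph_le hpos h4).lt_of_ne hne).trans_le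
    (two_pow_le_qIndepNum_copies_orthGraph hpos)

end ZeroError
end
end
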